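/- A sequence F = {f_i}_{i in I} in H is a K-frame for H if and only if the synthesis map T_F : ℓ²(I) → H, {c_i} ↦ Σ_i c_i f_i, is well defined (the series converges for every {c_i} in ℓ²(I)) and the range of K is contained in the range of T_F. Moreover, in the backward direction, F is a K-frame with lower bound 1/(‖T_F†‖²·‖K‖²), where T_F† is the pseudo-inverse of T_F. -/

import Mathlib

/-!
Let `T` be the synthesis operator. Then `Σ |⟪x, f i⟫|² = ‖T† x‖²`, so the `K`-frame inequalities
read `A ‖K† x‖² ≤ ‖T† x‖² ≤ B ‖x‖²`. The upper one holds exactly when `T` is bounded: a Bessel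
sequence has the adjoint of its analysis operator as synthesis operator, and conversely if every
series `Σ cᵢ fᵢ` converges, Banach–Steinhaus makes the limit of the partial-sum operators bounded.
By Douglas' lemma the lower one is equivalent to `R(K) ⊆ R(T)`: one direction is Hahn–Banach plus
Riesz representation, the other factors `K = T L` by the closed graph theorem. For a pseudo-inverse
`Td` of `T`, `T Td` fixes `R(T) ⊇ R(K)`, so `L = Td K` gives `‖K† x‖ ≤ ‖Td‖ ‖K‖ ‖T† x‖`.
-/

open ContinuousLinearMap Filter
open scoped ComplexInnerProductSpace InnerProduct

theorem inv_sq_mul_sq_le_of_le_mul {a b C : ℝ} (ha : 0 ≤ a) (h : a ≤ C * b) :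
    (C ^ 2)⁻¹ * a ^ 2 ≤ b ^ 2 := by
  rcases eq_or_ne C 0 with rfl | hC
  · simpa using sq_nonneg b
  calc (C ^ 2)⁻¹ * a ^ 2 ≤ (C ^ 2)⁻¹ * (C * b) ^ 2 := by gcongr
    _ = b ^ 2 := by field_simp

theorem lp.hasSum_norm_sq {α : Type*} {E : α → Type*} [∀ i, NormedAddCommGroup (E i)]
    (c : lp E 2) : HasSum (fun i ↦ ‖c i‖ ^ 2) (‖c‖ ^ 2) := by
  simpa using lp.hasSum_norm (p := 2) (by norm_num) c

theorem memℓp_two_of_summable {α : Type*} {E : α → Type*} [∀ i, NormedAddCommGroup (E i)]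
    {c : ∀ i, E i} (hc : Summable fun i ↦ ‖c i‖ ^ 2) : Memℓp c 2 :=
  memℓp_gen (by simpa using hc)

namespace ContinuousLinearMap

open scoped InnerProductSpace

theorem exists_comp_eq_of_injective_of_range_subset {𝕜 E F G : Type*}
    [NontriviallyNormedField 𝕜]
    [NormedAddCommGroup E] [NormedSpace 𝕜 E] [CompleteSpace E]
    [NormedAddCommGroup F] [NormedSpace 𝕜 F]
    [NormedAddCommGroup G] [NormedSpace 𝕜 G] [CompleteSpace G]
    (S : E →L[𝕜] F) (hS : Function.Injective S) (K : G →L[𝕜] F)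
    (h : Set.range K ⊆ Set.range S) : ∃ L : G →L[𝕜] E, S ∘L L = K := by
  let L₀ : G →ₗ[𝕜] E := (LinearEquiv.ofInjective (S : E →ₗ[𝕜] F) hS).symm.toLinearMap ∘ₗ
    (K : G →ₗ[𝕜] F).codRestrict _ fun x ↦ h ⟨x, rfl⟩
  have hSL : ∀ x, S (L₀ x) = K x := fun x ↦ LinearEquiv.ofInjective_symm_apply (h := hS) _ _
  refine ⟨.ofSeqClosedGraph (g := L₀) fun u x y hu hy ↦ hS ?_, ext hSL⟩
  refine tendsto_nhds_unique ((S.continuous.tendsto y).comp hy) ?_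
  simpa only [Function.comp_def, hSL] using (K.continuous.tendsto x).comp hu

theorem exists_comp_eq_of_range_subset {𝕜 E F G : Type*} [RCLike 𝕜]
    [NormedAddCommGroup E] [InnerProductSpace 𝕜 E] [CompleteSpace E]
    [NormedAddCommGroup F] [NormedSpace 𝕜 F]
    [NormedAddCommGroup G] [NormedSpace 𝕜 G] [CompleteSpace G]
    (T : E →L[𝕜] F) (K : G →L[𝕜] F) (h : Set.range K ⊆ Set.range T) :
    ∃ L : G →L[𝕜] E, T ∘L L = K := by
  let N := LinearMap.ker (T : E →ₗ[𝕜] F)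
  have : CompleteSpace N := T.isClosed_ker.completeSpace_coe
  have hinj : Function.Injective (T ∘L Nᗮ.subtypeL) :=
    (injective_iff_map_eq_zero _).2 fun v hv ↦
      Subtype.ext (Submodule.disjoint_def.1 N.orthogonal_disjoint v hv v.2)
  have hrange : Set.range T ⊆ Set.range (T ∘L Nᗮ.subtypeL) := by
    rintro _ ⟨c, rfl⟩
    refine ⟨Nᗮ.orthogonalProjectionOnto c, ?_⟩
    have hc : T (N.starProjection c) = 0 := N.starProjection_apply_mem c
    conv_rhs => rw [← N.starProjection_add_starProjection_orthogonal c, map_add, hc, zero_add]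
    rfl
  obtain ⟨L, hL⟩ := exists_comp_eq_of_injective_of_range_subset _ hinj K (h.trans hrange)
  exact ⟨Nᗮ.subtypeL ∘L L, hL⟩

variable {𝕜 E F G : Type*} [RCLike 𝕜]
  [NormedAddCommGroup E] [InnerProductSpace 𝕜 E] [CompleteSpace E]
  [NormedAddCommGroup F] [InnerProductSpace 𝕜 F] [CompleteSpace F]
  [NormedAddCommGroup G] [InnerProductSpace 𝕜 G] [CompleteSpace G]

theorem norm_adjoint_apply_le (T : E →L[𝕜] F) (x : F) : ‖(T†) x‖ ≤ ‖T‖ * ‖x‖ :=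
  (T†).le_of_opNorm_le (adjoint.norm_map T).le x

theorem norm_adjoint_comp_apply_le (T : E →L[𝕜] F) (L : G →L[𝕜] E) (x : F) :
    ‖((T ∘L L)†) x‖ ≤ ‖L‖ * ‖(T†) x‖ := by
  rw [adjoint_comp]
  exact norm_adjoint_apply_le L _

theorem mem_range_of_norm_inner_le (T : E →L[𝕜] F) (y : F) (M : ℝ)
    (h : ∀ x, ‖⟪y, x⟫_𝕜‖ ≤ M * ‖(T†) x‖) : y ∈ Set.range T := by
  -- `T† x ↦ ⟪y, x⟫` is a well-defined bounded functional on `R(T†)`; the Riesz vector `c` of a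
  -- Hahn–Banach extension satisfies `⟪T c, x⟫ = ⟪c, T† x⟫ = ⟪y, x⟫`.
  let A : F →ₗ[𝕜] E := T†
  let φ : F →ₗ[𝕜] 𝕜 := innerSL 𝕜 y
  have hker : LinearMap.ker A ≤ LinearMap.ker φ := fun x hx ↦ by
    simpa [A, φ, show (T†) x = 0 from hx] using h x
  let ℓ₀ : LinearMap.range A →ₗ[𝕜] 𝕜 :=
    (LinearMap.ker A).liftQ φ hker ∘ₗ A.quotKerEquivRange.symm.toLinearMap
  have hℓ₀ : ∀ x, ℓ₀ ⟨A x, LinearMap.mem_range_self A x⟩ = ⟪y, x⟫_𝕜 := fun x ↦ by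
    simp [ℓ₀, φ]
  let ℓ := ℓ₀.mkContinuous M fun ⟨_, x, hx⟩ ↦ by
    subst hx; exact (congrArg norm (hℓ₀ x)).trans_le (h x)
  obtain ⟨g, hg, -⟩ := exists_extension_norm_eq _ ℓ
  refine ⟨(InnerProductSpace.toDual 𝕜 E).symm g, ext_inner_right 𝕜 fun x ↦ ?_⟩
  rw [← adjoint_inner_right, InnerProductSpace.toDual_symm_apply]
  exact (hg ⟨A x, LinearMap.mem_range_self A x⟩).trans (hℓ₀ x)

theorem range_subset_range_of_norm_adjoint_le (T : E →L[𝕜] F) (K : G →L[𝕜] F) (C : ℝ)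
    (h : ∀ x, ‖(K†) x‖ ≤ C * ‖(T†) x‖) : Set.range K ⊆ Set.range T := by
  rintro _ ⟨z, rfl⟩
  refine mem_range_of_norm_inner_le T (K z) (‖z‖ * C) fun x ↦ ?_
  calc ‖⟪K z, x⟫_𝕜‖ = ‖⟪z, (K†) x⟫_𝕜‖ := by rw [adjoint_inner_right]
    _ ≤ ‖z‖ * ‖(K†) x‖ := norm_inner_le_norm _ _
    _ ≤ ‖z‖ * (C * ‖(T†) x‖) := by gcongr; exact h x
    _ = ‖z‖ * C * ‖(T†) x‖ := by ring

end ContinuousLinearMap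

section Frames

open scoped InnerProductSpace

variable (𝕜 : Type*) {H I : Type*} [RCLike 𝕜] [NormedAddCommGroup H] [InnerProductSpace 𝕜 H]

def IsBesselSeq (f : I → H) (B : ℝ) : Prop :=
  ∀ x, Summable (fun i ↦ ‖⟪x, f i⟫_𝕜‖ ^ 2) ∧ ∑' i, ‖⟪x, f i⟫_𝕜‖ ^ 2 ≤ B * ‖x‖ ^ 2

def IsSynthesis (f : I → H) (T : lp (fun _ : I ↦ 𝕜) 2 →L[𝕜] H) : Prop :=
  ∀ c, HasSum (fun i ↦ c i • f i) (T c)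

def IsKFrame {G : Type*} [NormedAddCommGroup G] [InnerProductSpace 𝕜 G] [CompleteSpace G]
    [CompleteSpace H] (K : G →L[𝕜] H) (f : I → H) : Prop :=
  ∃ A > (0 : ℝ), ∃ B > (0 : ℝ), ∀ x : H, Summable (fun i ↦ ‖⟪x, f i⟫_𝕜‖ ^ 2) ∧
    A * ‖(K†) x‖ ^ 2 ≤ ∑' i, ‖⟪x, f i⟫_𝕜‖ ^ 2 ∧ ∑' i, ‖⟪x, f i⟫_𝕜‖ ^ 2 ≤ B * ‖x‖ ^ 2

variable {𝕜} {f : I → H}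

namespace IsBesselSeq

variable {B : ℝ}

noncomputable def analysis (hf : IsBesselSeq 𝕜 f B) : H →L[𝕜] lp (fun _ : I ↦ 𝕜) 2 :=
  LinearMap.mkContinuous
    { toFun x := ⟨fun i ↦ ⟪f i, x⟫_𝕜, memℓp_two_of_summable <| by
        simpa only [norm_inner_symm] using (hf x).1⟩
      map_add' x y := lp.ext <| funext fun i ↦ inner_add_right _ _ _
      map_smul' a x := lp.ext <| funext fun i ↦ inner_smul_right _ _ _ }
    (√B) fun x ↦ by
      rw [← Real.sqrt_sq (norm_nonneg x), ← Real.sqrt_mul' _ (sq_nonneg _)]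
      refine Real.le_sqrt_of_sq_le ?_
      rw [← (lp.hasSum_norm_sq _).tsum_eq]
      calc _ = ∑' i, ‖⟪x, f i⟫_𝕜‖ ^ 2 := tsum_congr fun i ↦ by rw [norm_inner_symm]; rfl
        _ ≤ B * ‖x‖ ^ 2 := (hf x).2

@[simp]
theorem analysis_apply (hf : IsBesselSeq 𝕜 f B) (x : H) (i : I) :
    hf.analysis x i = ⟪f i, x⟫_𝕜 :=
  rfl

theorem isSynthesis_adjoint_analysis [CompleteSpace H] (hf : IsBesselSeq 𝕜 f B) :
    IsSynthesis 𝕜 f (hf.analysis†) := by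
  classical
  have hsingle : ∀ i (a : 𝕜), (hf.analysis†) (lp.single 2 i a) = a • f i := fun i a ↦
    ext_inner_left 𝕜 fun x ↦ by
      rw [adjoint_inner_right, lp.inner_single_right, analysis_apply, inner_smul_right,
        RCLike.inner_apply, inner_conj_symm]
  exact fun c ↦ by simpa only [hsingle] using (lp.hasSum_single (by norm_num) c).mapL (hf.analysis†)

end IsBesselSeq

theorem exists_isSynthesis_of_summable [Countable I]
    (h : ∀ c : lp (fun _ : I ↦ 𝕜) 2, Summable fun i ↦ c i • f i) :
    ∃ T, IsSynthesis 𝕜 f T :=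
  -- `Finset I` is countable, so `atTop` is countably generated, as Banach–Steinhaus needs.
  ⟨continuousLinearMapOfTendsto (l := atTop) (f := fun c ↦ ∑' i, c i • f i)
      (fun s ↦ ∑ i ∈ s, (lp.evalCLM 𝕜 (fun _ : I ↦ 𝕜) 2 i).smulRight (f i))
      (tendsto_pi_nhds.2 fun c ↦ by simpa [sum_apply, lp.evalCLM, HasSum] using (h c).hasSum),
    fun c ↦ (h c).hasSum⟩

namespace IsSynthesis

variable [CompleteSpace H] {T : lp (fun _ : I ↦ 𝕜) 2 →L[𝕜] H}

theorem adjoint_apply (hT : IsSynthesis 𝕜 f T) (x : H) (i : I) : ((T†) x) i = ⟪f i, x⟫_𝕜 := by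
  classical
  have hfi : T (lp.single 2 i 1) = f i :=
    (hT _).unique <| by
      simpa using hasSum_single (f := fun j ↦ (lp.single 2 i 1 : lp (fun _ : I ↦ 𝕜) 2) j • f j) i
        fun j hj ↦ by simp [hj]
  have := adjoint_inner_left T (lp.single 2 i 1) x
  rw [lp.inner_single_right, hfi, RCLike.inner_apply, one_mul] at this
  rw [← inner_conj_symm, ← this, RCLike.conj_conj]

theorem hasSum_norm_inner_sq (hT : IsSynthesis 𝕜 f T) (x : H) :
    HasSum (fun i ↦ ‖⟪x, f i⟫_𝕜‖ ^ 2) (‖(T†) x‖ ^ 2) := by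
  simpa only [hT.adjoint_apply, norm_inner_symm] using lp.hasSum_norm_sq ((T†) x)

theorem isKFrame_iff {G : Type*} [NormedAddCommGroup G] [InnerProductSpace 𝕜 G]
    [CompleteSpace G] (hT : IsSynthesis 𝕜 f T) (K : G →L[𝕜] H) :
    IsKFrame 𝕜 K f ↔ Set.range K ⊆ Set.range T := by
  have hsum := hT.hasSum_norm_inner_sq
  constructor
  · rintro ⟨A, hA, _, _, hF⟩
    refine range_subset_range_of_norm_adjoint_le T K (√A)⁻¹ fun x ↦ ?_
    rw [le_inv_mul_iff₀ (Real.sqrt_pos.2 hA)]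
    refine le_of_pow_le_pow_left₀ two_ne_zero (norm_nonneg _) ?_
    rw [mul_pow, Real.sq_sqrt hA.le, ← (hsum x).tsum_eq]
    exact (hF x).2.1
  · intro hK
    obtain ⟨L, rfl⟩ := exists_comp_eq_of_range_subset T K hK
    refine ⟨((‖L‖ + 1) ^ 2)⁻¹, by positivity, ‖T‖ ^ 2 + 1, by positivity, fun x ↦ ?_⟩
    rw [(hsum x).tsum_eq]
    refine ⟨(hsum x).summable, inv_sq_mul_sq_le_of_le_mul (norm_nonneg _) ?_, ?_⟩
    · calc ‖((T ∘L L)†) x‖ ≤ ‖L‖ * ‖(T†) x‖ := norm_adjoint_comp_apply_le T L x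
        _ ≤ (‖L‖ + 1) * ‖(T†) x‖ := by gcongr; linarith
    · calc ‖(T†) x‖ ^ 2 ≤ (‖T‖ * ‖x‖) ^ 2 := by gcongr; exact norm_adjoint_apply_le T x
        _ ≤ (‖T‖ ^ 2 + 1) * ‖x‖ ^ 2 := by rw [mul_pow]; gcongr; linarith

end IsSynthesis

end Frames

theorem stmt_2_general {H : Type*} [NormedAddCommGroup H] [InnerProductSpace ℂ H]
    [CompleteSpace H]
    {I : Type*} [Countable I]
    (f : I → H) (K : H →L[ℂ] H) :
    ((∃ A > (0 : ℝ), ∃ B > (0 : ℝ), ∀ x : H,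
        Summable (fun i => ‖⟪x, f i⟫‖ ^ 2) ∧
        A * ‖(ContinuousLinearMap.adjoint K) x‖ ^ 2 ≤ ∑' i, ‖⟪x, f i⟫‖ ^ 2 ∧
        ∑' i, ‖⟪x, f i⟫‖ ^ 2 ≤ B * ‖x‖ ^ 2) ↔
      ((∀ c : lp (fun _ : I => ℂ) 2, Summable fun i => c i • f i) ∧
        Set.range ⇑K ⊆
          {x : H | ∃ c : lp (fun _ : I => ℂ) 2, HasSum (fun i => c i • f i) x})) ∧
    (∀ T : lp (fun _ : I => ℂ) 2 →L[ℂ] H,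
      (∀ c : lp (fun _ : I => ℂ) 2, HasSum (fun i => c i • f i) (T c)) →
      ∀ Td : H →L[ℂ] lp (fun _ : I => ℂ) 2,
        T ∘L Td ∘L T = T → Td ∘L T ∘L Td = Td →
        IsSelfAdjoint (T ∘L Td) → IsSelfAdjoint (Td ∘L T) →
        Set.range ⇑K ⊆ Set.range ⇑T →
        ∀ x : H, (1 / (‖Td‖ ^ 2 * ‖K‖ ^ 2)) * ‖(ContinuousLinearMap.adjoint K) x‖ ^ 2 ≤
          ∑' i, ‖⟪x, f i⟫‖ ^ 2) := by
  refine ⟨⟨fun hF ↦ ?_, fun hs ↦ ?_⟩, ?_⟩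
  · obtain ⟨_, _, B, _, hf⟩ := id hF
    have hT : IsSynthesis ℂ f _ := IsBesselSeq.isSynthesis_adjoint_analysis (B := B)
      fun x ↦ ⟨(hf x).1, (hf x).2.2⟩
    refine ⟨fun c ↦ (hT c).summable, ?_⟩
    rintro _ ⟨z, rfl⟩
    obtain ⟨c, hc⟩ := (hT.isKFrame_iff K).1 hF ⟨z, rfl⟩
    exact ⟨c, hc ▸ hT c⟩
  · obtain ⟨T, hT⟩ := exists_isSynthesis_of_summable hs.1
    refine (hT.isKFrame_iff K).2 fun y hy ↦ ?_
    obtain ⟨c, hc⟩ := hs.2 hy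
    exact ⟨c, (hT c).unique hc⟩
  · intro T hT Td hTd _ _ _ hK x
    have hKT : T ∘L (Td ∘L K) = K := ext fun z ↦ by
      obtain ⟨c, hc⟩ := hK ⟨z, rfl⟩
      simpa [← hc] using DFunLike.congr_fun hTd c
    rw [(IsSynthesis.hasSum_norm_inner_sq hT x).tsum_eq, one_div, ← mul_pow]
    refine inv_sq_mul_sq_le_of_le_mul (norm_nonneg _) ?_
    calc ‖(K†) x‖ = ‖((T ∘L (Td ∘L K))†) x‖ := by rw [hKT]
      _ ≤ ‖Td ∘L K‖ * ‖(T†) x‖ := norm_adjoint_comp_apply_le T (Td ∘L K) x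
      _ ≤ ‖Td‖ * ‖K‖ * ‖(T†) x‖ := by gcongr; exact opNorm_comp_le _ _

/-- `F = {f i}` is a `K`-frame iff the synthesis map
`T_F : ℓ²(I) → H` is well defined (the series `Σ cᵢ fᵢ` converges for all
`c ∈ ℓ²`) and `R(K) ⊆ R(T_F)`.  Moreover, in the backward direction `F` is a
`K`-frame with lower bound `1/(‖T_F†‖²‖K‖²)`, where `T_F†` is the (Moore–Penrose)
pseudo-inverse of the synthesis operator `T_F`. -/
theorem stmt_2 {H : Type*} [NormedAddCommGroup H] [InnerProductSpace ℂ H]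
    [CompleteSpace H] [TopologicalSpace.SeparableSpace H]
    {I : Type*} [Countable I]
    (f : I → H) (K : H →L[ℂ] H) :
    ((∃ A > (0 : ℝ), ∃ B > (0 : ℝ), ∀ x : H,
        Summable (fun i => ‖⟪x, f i⟫‖ ^ 2) ∧
        A * ‖(ContinuousLinearMap.adjoint K) x‖ ^ 2 ≤ ∑' i, ‖⟪x, f i⟫‖ ^ 2 ∧
        ∑' i, ‖⟪x, f i⟫‖ ^ 2 ≤ B * ‖x‖ ^ 2) ↔
      ((∀ c : lp (fun _ : I => ℂ) 2, Summable fun i => c i • f i) ∧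
        Set.range ⇑K ⊆
          {x : H | ∃ c : lp (fun _ : I => ℂ) 2, HasSum (fun i => c i • f i) x})) ∧
    (∀ T : lp (fun _ : I => ℂ) 2 →L[ℂ] H,
      (∀ c : lp (fun _ : I => ℂ) 2, HasSum (fun i => c i • f i) (T c)) →
      ∀ Td : H →L[ℂ] lp (fun _ : I => ℂ) 2,
        T ∘L Td ∘L T = T → Td ∘L T ∘L Td = Td →
        IsSelfAdjoint (T ∘L Td) → IsSelfAdjoint (Td ∘L T) →
        Set.range ⇑K ⊆ Set.range ⇑T →
        ∀ x : H, (1 / (‖Td‖ ^ 2 * ‖K‖ ^ 2)) * ‖(ContinuousLinearMap.adjoint K) x‖ ^ 2 ≤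
          ∑' i, ‖⟪x, f i⟫‖ ^ 2) :=
  stmt_2_general f K
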